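/- arXiv:1810.09338 — 3 statements merged into one kernel-verified Lean document; each statement's English description precedes it below -/
import Mathlib

section
/- Let F ∈ ℂ[x₀, …, x_n] and G ∈ ℂ[y₀, …, y_m] be homogeneous polynomials of the same degree d in disjoint sets of variables, both regarded as elements of ℂ[x₀, …, x_n, y₀, …, y_m]. Then for every integer s with 1 ≤ s ≤ d − 1, the span of the s-th order partial derivatives of F + G is the direct sum of the spans of the s-th order partial derivatives of F and of G; in particular dim H_{∂^s(F+G)} = dim H_{∂^s F} + dim H_{∂^s G}. -/
/-! Every derivative of order `s ≥ 1` of `F + G` is taken along at least one variable, which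
is absent from `F` or from `G`; so it is a derivative of `G` or of `F` alone, and the span for
`F + G` is the sum of the two spans. The sum is direct: a common element involves no variable,
so it is a constant, whereas the derivatives of `F` are homogeneous of degree `d - s > 0`. -/

open MvPolynomial

/-- Iterated partial derivative of a polynomial along a list of variables. -/
noncomputable def derivList {σ : Type*} (l : List σ) (F : MvPolynomial σ ℂ) :
    MvPolynomial σ ℂ :=
  l.foldl (fun G i => MvPolynomial.pderiv i G) F

/-- `Hspan s F` is the linear span of all `s`-th order partial derivatives of `F`. -/
noncomputable def Hspan {σ : Type*} (s : ℕ) (F : MvPolynomial σ ℂ) :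
    Submodule ℂ (MvPolynomial σ ℂ) :=
  Submodule.span ℂ {P | ∃ l : List σ, l.length = s ∧ P = derivList l F}


section Supported

variable {σ τ R : Type*} [CommSemiring R] {S T : Set σ} {p : MvPolynomial σ R}

lemma MvPolynomial.rename_mem_supported_range (f : τ → σ) (q : MvPolynomial τ R) :
    rename f q ∈ supported R (Set.range f) := by
  classical
  rw [mem_supported]
  intro i hi
  obtain ⟨j, -, rfl⟩ := Finset.mem_image.mp (vars_rename f q hi)
  exact ⟨j, rfl⟩

lemma MvPolynomial.pderiv_mem_supported (i : σ) (hp : p ∈ supported R S) :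
    pderiv i p ∈ supported R S := by
  classical
  induction hp using Algebra.adjoin_induction with
  | mem x hx =>
    obtain ⟨j, -, rfl⟩ := hx
    rw [pderiv_X, Pi.single_apply]
    split_ifs <;> simp
  | algebraMap r => simp [MvPolynomial.algebraMap_eq]
  | add x y _ _ hx hy => simpa using add_mem hx hy
  | mul x y hx' hy' hx hy =>
    rw [Derivation.leibniz, smul_eq_mul, smul_eq_mul]
    exact add_mem (mul_mem hx' hy) (mul_mem hy' hx)

lemma MvPolynomial.pderiv_eq_zero_of_mem_supported {i : σ} (hp : p ∈ supported R S)
    (hi : i ∉ S) : pderiv i p = 0 :=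
  pderiv_eq_zero_of_notMem_vars fun h => hi (mem_supported.mp hp h)

lemma MvPolynomial.IsHomogeneous.eq_zero_of_mem_supported_of_disjoint {k : ℕ}
    (hp : p.IsHomogeneous k) (hk : k ≠ 0) (hST : Disjoint S T) (hS : p ∈ supported R S)
    (hT : p ∈ supported R T) : p = 0 := by
  have hvars : p.vars = ∅ := Finset.coe_eq_empty.mp <| Set.eq_empty_of_forall_notMem
    fun i hi => Set.disjoint_left.mp hST (mem_supported.mp hS hi) (mem_supported.mp hT hi)
  have hcoeff : p.coeff 0 = 0 := hp.coeff_eq_zero (by simpa using hk.symm)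
  rw [vars_eq_empty_iff_eq_C.mp hvars, hcoeff, C_0]

end Supported

section Derivatives

variable {σ : Type*} {S T : Set σ}

lemma derivList_cons (i : σ) (l : List σ) (F : MvPolynomial σ ℂ) :
    derivList (i :: l) F = derivList l (pderiv i F) := rfl

lemma derivList_add (l : List σ) (F G : MvPolynomial σ ℂ) :
    derivList l (F + G) = derivList l F + derivList l G := by
  induction l generalizing F G with
  | nil => rfl
  | cons i l ih => simp only [derivList_cons, map_add, ih]

lemma derivList_zero (l : List σ) : derivList l (0 : MvPolynomial σ ℂ) = 0 := by
  simpa using derivList_add l 0 0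

lemma isHomogeneous_derivList {F : MvPolynomial σ ℂ} {d : ℕ}
    (hF : F.IsHomogeneous d) (l : List σ) : (derivList l F).IsHomogeneous (d - l.length) := by
  induction l generalizing F d with
  | nil => simpa [derivList] using hF
  | cons i l ih =>
    simpa [derivList_cons, Nat.sub_sub, add_comm] using ih hF.pderiv

lemma derivList_mem_supported (l : List σ) {F : MvPolynomial σ ℂ} (hF : F ∈ supported ℂ S) :
    derivList l F ∈ supported ℂ S := by
  induction l generalizing F with
  | nil => exact hF
  | cons i l ih => exact ih (pderiv_mem_supported i hF)

lemma derivList_eq_zero_of_mem_supported {l : List σ} {F : MvPolynomial σ ℂ}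
    (hF : F ∈ supported ℂ S) (hl : ∃ i ∈ l, i ∉ S) : derivList l F = 0 := by
  induction l generalizing F with
  | nil => simp at hl
  | cons i l ih =>
    rw [derivList_cons]
    rcases (List.exists_mem_cons_iff _ i l).mp hl with hi | hl
    · rw [pderiv_eq_zero_of_mem_supported hF hi, derivList_zero]
    · exact ih (pderiv_mem_supported i hF) hl

lemma derivList_eq_zero_or_eq_zero_of_disjoint (hST : Disjoint S T) {F G : MvPolynomial σ ℂ}
    (hF : F ∈ supported ℂ S) (hG : G ∈ supported ℂ T) {l : List σ} (hl : l ≠ []) :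
    derivList l F = 0 ∨ derivList l G = 0 := by
  obtain ⟨i, hi⟩ := List.exists_mem_of_ne_nil l hl
  by_cases hiS : i ∈ S
  · exact .inr (derivList_eq_zero_of_mem_supported hG ⟨i, hi, hST.notMem_of_mem_left hiS⟩)
  · exact .inl (derivList_eq_zero_of_mem_supported hF ⟨i, hi, hiS⟩)

end Derivatives

section Hspan

variable {σ : Type*} {s : ℕ} {F G : MvPolynomial σ ℂ}

lemma Hspan_le_iff {p : Submodule ℂ (MvPolynomial σ ℂ)} :
    Hspan s F ≤ p ↔ ∀ l : List σ, l.length = s → derivList l F ∈ p := by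
  simp only [Hspan, Submodule.span_le, Set.subset_def, Set.mem_ofPred_eq, SetLike.mem_coe]
  exact ⟨fun h l hl => h _ ⟨l, hl, rfl⟩, by rintro h _ ⟨l, hl, rfl⟩; exact h l hl⟩

lemma derivList_mem_Hspan {l : List σ} (hl : l.length = s) : derivList l F ∈ Hspan s F :=
  Submodule.subset_span ⟨l, hl, rfl⟩

instance [Finite σ] : FiniteDimensional ℂ (Hspan s F) :=
  FiniteDimensional.span_of_finite ℂ <|
    ((List.finite_length_eq σ s).image (derivList · F)).subset
      fun _ ⟨l, hl, hP⟩ => ⟨l, hl, hP.symm⟩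

lemma Hspan_add_le : Hspan s (F + G) ≤ Hspan s F ⊔ Hspan s G :=
  Hspan_le_iff.mpr fun l hl => derivList_add l F G ▸
    Submodule.add_mem_sup (derivList_mem_Hspan hl) (derivList_mem_Hspan hl)

lemma Hspan_le_Hspan_add
    (h : ∀ l : List σ, l.length = s → derivList l F = 0 ∨ derivList l G = 0) :
    Hspan s F ≤ Hspan s (F + G) := by
  refine Hspan_le_iff.mpr fun l hl => ?_
  rcases h l hl with hF | hG
  · exact hF ▸ zero_mem _
  · simpa [derivList_add, hG] using derivList_mem_Hspan (F := F + G) hl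

lemma Hspan_add_eq_sup
    (h : ∀ l : List σ, l.length = s → derivList l F = 0 ∨ derivList l G = 0) :
    Hspan s (F + G) = Hspan s F ⊔ Hspan s G :=
  Hspan_add_le.antisymm <| sup_le (Hspan_le_Hspan_add h) <|
    add_comm F G ▸ Hspan_le_Hspan_add fun l hl => (h l hl).symm

lemma Hspan_le_homogeneousSubmodule {d : ℕ} (hF : F.IsHomogeneous d) :
    Hspan s F ≤ homogeneousSubmodule σ ℂ (d - s) :=
  Hspan_le_iff.mpr fun l hl => hl ▸ isHomogeneous_derivList hF l

lemma Hspan_le_supported {S : Set σ} (hF : F ∈ supported ℂ S) :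
    Hspan s F ≤ Subalgebra.toSubmodule (supported ℂ S) :=
  Hspan_le_iff.mpr fun l _ => derivList_mem_supported l hF

lemma disjoint_Hspan {S T : Set σ} {d : ℕ} (hST : Disjoint S T) (hsd : s < d)
    (hFd : F.IsHomogeneous d) (hF : F ∈ supported ℂ S) (hG : G ∈ supported ℂ T) :
    Disjoint (Hspan s F) (Hspan s G) :=
  Submodule.disjoint_def.mpr fun _ hPF hPG =>
    (Hspan_le_homogeneousSubmodule hFd hPF).eq_zero_of_mem_supported_of_disjoint
      (Nat.sub_ne_zero_of_lt hsd) hST (Hspan_le_supported hF hPF) (Hspan_le_supported hG hPG)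

lemma finrank_Hspan_add [Finite σ]
    (h : ∀ l : List σ, l.length = s → derivList l F = 0 ∨ derivList l G = 0)
    (hdisj : Disjoint (Hspan s F) (Hspan s G)) :
    Module.finrank ℂ (Hspan s (F + G)) =
      Module.finrank ℂ (Hspan s F) + Module.finrank ℂ (Hspan s G) := by
  rw [Hspan_add_eq_sup h, ← Submodule.finrank_sup_add_finrank_inf_eq, hdisj.eq_bot, finrank_bot,
    add_zero]

end Hspan

theorem partials_direct_sum_general (n m d s : ℕ) (hs0 : 1 ≤ s) (hsd : s ≤ d - 1)
    (F₀ : MvPolynomial (Fin (n + 1)) ℂ) (G₀ : MvPolynomial (Fin (m + 1)) ℂ)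
    (hF : F₀.IsHomogeneous d)
    (F : MvPolynomial (Fin (n + 1) ⊕ Fin (m + 1)) ℂ)
    (G : MvPolynomial (Fin (n + 1) ⊕ Fin (m + 1)) ℂ)
    (hFdef : F = rename Sum.inl F₀) (hGdef : G = rename Sum.inr G₀) :
    Hspan s (F + G) = Hspan s F ⊔ Hspan s G ∧
      Disjoint (Hspan s F) (Hspan s G) ∧
      Module.finrank ℂ (Hspan s (F + G)) =
        Module.finrank ℂ (Hspan s F) + Module.finrank ℂ (Hspan s G) := by
  have hST := Set.isCompl_range_inl_range_inr (α := Fin (n + 1)) (β := Fin (m + 1)) |>.disjoint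
  have hFS : F ∈ supported ℂ (Set.range Sum.inl) := hFdef ▸ rename_mem_supported_range _ _
  have hGS : G ∈ supported ℂ (Set.range Sum.inr) := hGdef ▸ rename_mem_supported_range _ _
  have hsplit : ∀ l : List (Fin (n + 1) ⊕ Fin (m + 1)), l.length = s →
      derivList l F = 0 ∨ derivList l G = 0 := fun l hl =>
    derivList_eq_zero_or_eq_zero_of_disjoint hST hFS hGS (List.ne_nil_of_length_pos (by omega))
  have hdisj :=
    disjoint_Hspan hST (show s < d by omega) (hFdef ▸ hF.rename_isHomogeneous) hFS hGS
  exact ⟨Hspan_add_eq_sup hsplit, hdisj, finrank_Hspan_add hsplit hdisj⟩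

/-- Let `F ∈ ℂ[x₀,…,x_n]` and `G ∈ ℂ[y₀,…,y_m]` be homogeneous of the
same degree `d` in disjoint sets of variables, regarded in `ℂ[x₀,…,x_n,y₀,…,y_m]`.
Then for every `1 ≤ s ≤ d - 1` the span of the `s`-th order partial derivatives of
`F + G` is the (internal) direct sum of the spans of the `s`-th order partial
derivatives of `F` and of `G`; in particular the dimensions add up. -/
theorem partials_direct_sum (n m d s : ℕ) (hs0 : 1 ≤ s) (hsd : s ≤ d - 1) (hd : 1 ≤ d)
    (F₀ : MvPolynomial (Fin (n + 1)) ℂ) (G₀ : MvPolynomial (Fin (m + 1)) ℂ)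
    (hF : F₀.IsHomogeneous d) (hG : G₀.IsHomogeneous d)
    (F : MvPolynomial (Fin (n + 1) ⊕ Fin (m + 1)) ℂ)
    (G : MvPolynomial (Fin (n + 1) ⊕ Fin (m + 1)) ℂ)
    (hFdef : F = rename Sum.inl F₀) (hGdef : G = rename Sum.inr G₀) :
    Hspan s (F + G) = Hspan s F ⊔ Hspan s G ∧
      Disjoint (Hspan s F) (Hspan s G) ∧
      Module.finrank ℂ (Hspan s (F + G)) =
        Module.finrank ℂ (Hspan s F) + Module.finrank ℂ (Hspan s G) :=
  partials_direct_sum_general n m d s hs0 hsd F₀ G₀ hF F G hFdef hGdef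
end

section
/- For every linear form L ∈ ℂ[x₀, x₁, x₂, x₃, x₄]₁ and every homogeneous cubic form F ∈ ℂ[x₀, x₁, x₂, x₃, x₄]₃, the quartic L·F satisfies dim H_{∂²(L·F)} ≤ 14; equivalently, the 15×15 middle catalecticant matrix of L·F (the matrix of the linear map sending degree-2 differential operators to the corresponding second-order partial derivatives of L·F) has vanishing determinant. -/
open MvPolynomial

/-! By the Leibniz rule, `∂ᵢ∂ⱼ(L·F) = ∂ᵢL·∂ⱼF + ∂ⱼL·∂ᵢF + L·∂ᵢ∂ⱼF`. Since `L` is linear, `∂ᵢL` and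
`∂ⱼL` are constants and `∂ᵢ∂ⱼF` is a linear form, so every second derivative of `L·F` lies in the
span of the five first derivatives `∂ₖF` and the five products `L·xₖ`. Hence
`dim H_{∂²(L·F)} ≤ 10`. -/

namespace MvPolynomial

variable {σ R : Type*} [CommSemiring R]

lemma IsHomogeneous.pderiv_eq_C_of_one {L : MvPolynomial σ R} (hL : L.IsHomogeneous 1) (i : σ) :
    pderiv i L = C (coeff 0 (pderiv i L)) :=
  totalDegree_eq_zero_iff_eq_C.mp ((totalDegree_zero_iff_isHomogeneous _).mpr hL.pderiv)

lemma IsHomogeneous.mul_mem_span_mul_X_of_one (L : MvPolynomial σ R) {G : MvPolynomial σ R}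
    (hG : G.IsHomogeneous 1) :
    L * G ∈ Submodule.span R (Set.range fun k => L * X k) := by
  have hG' : G ∈ Submodule.span R (Set.range X) := by
    rw [← homogeneousSubmodule_one_eq_span_X]
    exact hG
  rw [Set.range_comp' (L * ·) X]
  exact Submodule.apply_mem_span_image_of_mem_span (LinearMap.mulLeft R L) hG'

end MvPolynomial

section LinearTimesCubic

variable {σ : Type*} {L F : MvPolynomial σ ℂ}

lemma pderiv_pderiv_mul_mem_span (hL : L.IsHomogeneous 1) (hF : F.IsHomogeneous 3) (i j : σ) :
    pderiv j (pderiv i (L * F)) ∈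
      Submodule.span ℂ (Set.range (Sum.elim (fun k => pderiv k F) (fun k => L * X k))) := by
  set W := Submodule.span ℂ (Set.range (Sum.elim (fun k => pderiv k F) (fun k => L * X k)))
  have hiL := hL.pderiv_eq_C_of_one i
  have hjL := hL.pderiv_eq_C_of_one j
  have hijL : pderiv j (pderiv i L) = 0 := by rw [hiL, pderiv_C]
  have hdF (k : σ) : pderiv k F ∈ W := Submodule.subset_span ⟨Sum.inl k, rfl⟩
  have hLX : Submodule.span ℂ (Set.range fun k => L * X k) ≤ W :=
    Submodule.span_mono (by rintro _ ⟨k, rfl⟩; exact ⟨Sum.inr k, rfl⟩)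
  rw [pderiv_mul, map_add, pderiv_mul, pderiv_mul, hijL, zero_mul, zero_add]
  refine W.add_mem ?_ (W.add_mem ?_ ?_)
  · rw [hiL, ← smul_eq_C_mul]
    exact W.smul_mem _ (hdF j)
  · rw [hjL, ← smul_eq_C_mul]
    exact W.smul_mem _ (hdF i)
  · exact hLX (hF.pderiv.pderiv.mul_mem_span_mul_X_of_one L)

lemma Hspan_two_mul_le_span (hL : L.IsHomogeneous 1) (hF : F.IsHomogeneous 3) :
    Hspan 2 (L * F) ≤
      Submodule.span ℂ (Set.range (Sum.elim (fun k => pderiv k F) (fun k => L * X k))) := by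
  rw [Hspan, Submodule.span_le]
  rintro _ ⟨l, hl, rfl⟩
  obtain ⟨i, j, rfl⟩ := List.length_eq_two.1 hl
  exact pderiv_pderiv_mul_mem_span hL hF i j

lemma finrank_Hspan_two_mul_le [Fintype σ] (hL : L.IsHomogeneous 1) (hF : F.IsHomogeneous 3) :
    Module.finrank ℂ (Hspan 2 (L * F)) ≤ 2 * Fintype.card σ := by
  let g := Sum.elim (fun k => pderiv k F) (fun k => L * X k)
  have : FiniteDimensional ℂ (Submodule.span ℂ (Set.range g)) :=
    FiniteDimensional.span_of_finite ℂ (Set.finite_range g)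
  calc Module.finrank ℂ (Hspan 2 (L * F))
      ≤ Module.finrank ℂ (Submodule.span ℂ (Set.range g)) :=
        Submodule.finrank_mono (Hspan_two_mul_le_span hL hF)
    _ ≤ Fintype.card (σ ⊕ σ) := finrank_range_le_card g
    _ = 2 * Fintype.card σ := by rw [Fintype.card_sum, two_mul]

end LinearTimesCubic

/-- For every linear form `L` and cubic form `F` in
`ℂ[x₀,…,x₄]`, the quartic `L·F` satisfies `dim H_{∂²(L·F)} ≤ 14`, i.e. its 15×15
middle catalecticant matrix is singular. -/
theorem osculating_in_secant_n4 (L F : MvPolynomial (Fin 5) ℂ)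
    (hL : L.IsHomogeneous 1) (hF : F.IsHomogeneous 3) :
    Module.finrank ℂ (Hspan 2 (L * F)) ≤ 14 :=
  (finrank_Hspan_two_mul_le hL hF).trans (by simp)
end

section
/- For every integer n with 2 ≤ n ≤ 30, there exist linear forms L₁, …, L_{n+1} ∈ ℂ[x₀, …, x_n]₁ such that, setting F = L₁³ + ⋯ + L_{n+1}³, the quartic x₀F satisfies dim H_{∂²(x₀F)} ≥ 2n + 1; that is, the second catalecticant matrix of x₀F has rank at least 2(n+1) − 1. -/
/-!
Take the Fermat cubic `F = x₀³ + ⋯ + x_n³`. The second partial derivatives of `x₀F` are, up to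
nonzero scalars, the monomials `x₀²` (from `∂₀∂₀`), `x_j²` (from `∂₀∂_j`) and `x₀x_j` (from
`∂_j∂_j`) for `j ≠ 0`. These are `2(n+1) - 1` distinct monomials, hence linearly independent
elements of `H_{∂²(x₀F)}`.
-/

open MvPolynomial

section

variable {σ : Type*}

lemma derivList_pair (a b : σ) (F : MvPolynomial σ ℂ) :
    derivList [a, b] F = pderiv b (pderiv a F) := rfl

lemma mem_Hspan_of_derivList_eq_C_mul {s : ℕ} {F p : MvPolynomial σ ℂ} {c : ℂ} (hc : c ≠ 0)
    {l : List σ} (hl : l.length = s) (h : derivList l F = C c * p) : p ∈ Hspan s F := by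
  have hl : C c * p ∈ Hspan s F := h ▸ Submodule.subset_span ⟨l, hl, rfl⟩
  have hp : c⁻¹ • (C c * p) = p := by rw [C_mul', smul_smul, inv_mul_cancel₀ hc, one_smul]
  simpa only [hp] using Submodule.smul_mem _ c⁻¹ hl

instance finiteDimensional_Hspan [Finite σ] (s : ℕ) (F : MvPolynomial σ ℂ) :
    FiniteDimensional ℂ (Hspan s F) := by
  refine FiniteDimensional.span_of_finite ℂ (((List.finite_length_eq σ s).image
    (derivList · F)).subset ?_)
  rintro P ⟨l, hl, rfl⟩
  exact ⟨l, hl, rfl⟩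

lemma card_le_finrank_Hspan_of_monomial_mem [Finite σ] {s : ℕ} {F : MvPolynomial σ ℂ}
    {ι : Type*} [Fintype ι] {e : ι → σ →₀ ℕ} (he : Function.Injective e)
    (hmem : ∀ i, monomial (e i) (1 : ℂ) ∈ Hspan s F) :
    Fintype.card ι ≤ Module.finrank ℂ (Hspan s F) := by
  have hli : LinearIndependent ℂ (fun i => monomial (e i) (1 : ℂ)) := by
    simpa only [Function.comp_def, coe_basisMonomials] using
      (basisMonomials σ ℂ).linearIndependent.comp e he
  rw [← finrank_span_eq_card hli]
  exact Submodule.finrank_mono (Submodule.span_le.mpr (Set.range_subset_iff.mpr hmem))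

lemma pderiv_ofNat (i : σ) (k : ℕ) [k.AtLeastTwo] :
    pderiv i (OfNat.ofNat k : MvPolynomial σ ℂ) = 0 := by
  rw [← map_ofNat (C : ℂ →+* MvPolynomial σ ℂ) k, pderiv_C]

lemma pderiv_sum_X_pow_three [Fintype σ] (j : σ) :
    pderiv j (∑ i, (X i : MvPolynomial σ ℂ) ^ 3) = 3 * X j ^ 2 := by
  rw [map_sum, Finset.sum_eq_single j]
  · simp
  · intro i _ hij
    simp [pderiv_X_of_ne hij]
  · simp

lemma derivList_X_mul_sum_X_pow_three_self [Fintype σ] (i₀ : σ) :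
    derivList [i₀, i₀] (X i₀ * ∑ i, (X i : MvPolynomial σ ℂ) ^ 3) = C 12 * X i₀ ^ 2 := by
  rw [derivList_pair, pderiv_mul, pderiv_sum_X_pow_three, pderiv_X_self, map_add, pderiv_mul,
    pderiv_mul, pderiv_sum_X_pow_three, pderiv_X_self, pderiv_one, pderiv_mul, pderiv_pow,
    pderiv_X_self, pderiv_ofNat, map_ofNat]
  ring

lemma derivList_X_mul_sum_X_pow_three_of_ne [Fintype σ] {i₀ j : σ} (hj : j ≠ i₀) :
    derivList [i₀, j] (X i₀ * ∑ i, (X i : MvPolynomial σ ℂ) ^ 3) = C 3 * X j ^ 2 := by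
  rw [derivList_pair, pderiv_mul, pderiv_sum_X_pow_three, pderiv_X_self, map_add, pderiv_mul,
    pderiv_mul, pderiv_sum_X_pow_three, pderiv_one, pderiv_mul, pderiv_pow, pderiv_ofNat,
    pderiv_X_of_ne hj.symm, map_ofNat]
  ring

lemma derivList_X_mul_sum_X_pow_three_diag_of_ne [Fintype σ] {i₀ j : σ} (hj : j ≠ i₀) :
    derivList [j, j] (X i₀ * ∑ i, (X i : MvPolynomial σ ℂ) ^ 3) = C 6 * (X i₀ * X j) := by
  rw [derivList_pair, pderiv_mul, pderiv_sum_X_pow_three, pderiv_X_of_ne hj.symm, map_add,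
    pderiv_mul, pderiv_mul, pderiv_sum_X_pow_three, pderiv_X_of_ne hj.symm, pderiv_mul,
    pderiv_ofNat, pderiv_pow, pderiv_X_self, map_ofNat, map_zero]
  ring

noncomputable def quadraticExponent (i₀ : σ) : σ ⊕ {j // j ≠ i₀} → σ →₀ ℕ
  | .inl k => Finsupp.single k 2
  | .inr j => Finsupp.single i₀ 1 + Finsupp.single j.1 1

lemma quadraticExponent_injective (i₀ : σ) : Function.Injective (quadraticExponent i₀) := by
  have square_ne_mixed (k : σ) (j : {j // j ≠ i₀}) :
      Finsupp.single k 2 ≠ Finsupp.single i₀ 1 + Finsupp.single j.1 1 := by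
    classical
    intro h
    have hj := DFunLike.congr_fun h j.1
    simp only [Finsupp.add_apply, Finsupp.single_apply, if_neg j.2.symm] at hj
    split_ifs at hj
    omega
  rintro (k | j) (k' | j') h <;> simp only [quadraticExponent] at h
  · rw [Finsupp.single_left_injective two_ne_zero h]
  · exact (square_ne_mixed k j' h).elim
  · exact (square_ne_mixed k' j h.symm).elim
  · rw [Subtype.ext (Finsupp.single_left_injective one_ne_zero (add_left_cancel h))]

lemma monomial_quadraticExponent_mem_Hspan [Fintype σ] (i₀ : σ) (m : σ ⊕ {j // j ≠ i₀}) :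
    monomial (quadraticExponent i₀ m) (1 : ℂ) ∈ Hspan 2 (X i₀ * ∑ i, X i ^ 3) := by
  rcases m with k | ⟨j, hj⟩
  · rcases eq_or_ne k i₀ with rfl | hk
    · refine mem_Hspan_of_derivList_eq_C_mul (by norm_num : (12 : ℂ) ≠ 0) (l := [k, k]) rfl ?_
      rw [derivList_X_mul_sum_X_pow_three_self, X_pow_eq_monomial]
      rfl
    · refine mem_Hspan_of_derivList_eq_C_mul (by norm_num : (3 : ℂ) ≠ 0) (l := [i₀, k]) rfl ?_
      rw [derivList_X_mul_sum_X_pow_three_of_ne hk, X_pow_eq_monomial]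
      rfl
  · refine mem_Hspan_of_derivList_eq_C_mul (by norm_num : (6 : ℂ) ≠ 0) (l := [j, j]) rfl ?_
    rw [derivList_X_mul_sum_X_pow_three_diag_of_ne hj, X, X, monomial_mul, one_mul]
    rfl

lemma two_mul_card_sub_one_le_finrank_Hspan_two [Fintype σ] [DecidableEq σ] (i₀ : σ) :
    2 * Fintype.card σ - 1 ≤
      Module.finrank ℂ (Hspan 2 (X i₀ * ∑ i, (X i : MvPolynomial σ ℂ) ^ 3)) := by
  have hcard := card_le_finrank_Hspan_of_monomial_mem (quadraticExponent_injective i₀)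
    (monomial_quadraticExponent_mem_Hspan i₀)
  have hσ : 0 < Fintype.card σ := Fintype.card_pos_iff.mpr ⟨i₀⟩
  simp only [Fintype.card_sum, Fintype.card_subtype_compl, Fintype.card_unique] at hcard
  omega

end

theorem cubic_certificate_general (n : ℕ) :
    ∃ L : Fin (n + 1) → MvPolynomial (Fin (n + 1)) ℂ,
      (∀ i, (L i).IsHomogeneous 1) ∧
      2 * n + 1 ≤ Module.finrank ℂ (Hspan 2 (X 0 * ∑ i, (L i) ^ 3)) := by
  refine ⟨X, fun i => isHomogeneous_X ℂ i, ?_⟩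
  have h := two_mul_card_sub_one_le_finrank_Hspan_two (σ := Fin (n + 1)) 0
  rw [Fintype.card_fin] at h
  omega

/-- **certificate for Comon's conjecture for cubics, `2 ≤ n ≤ 30`.**
For every `2 ≤ n ≤ 30` there are linear forms `L₁, …, L_{n+1}` in `ℂ[x₀,…,x_n]` such
that, with `F = L₁³ + ⋯ + L_{n+1}³`, the second catalecticant of the quartic `x₀F` has
rank at least `2(n+1) - 1 = 2n + 1`. -/
theorem cubic_certificate (n : ℕ) (h2 : 2 ≤ n) (h30 : n ≤ 30) :
    ∃ L : Fin (n + 1) → MvPolynomial (Fin (n + 1)) ℂ,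
      (∀ i, (L i).IsHomogeneous 1) ∧
      2 * n + 1 ≤ Module.finrank ℂ (Hspan 2 (X 0 * ∑ i, (L i) ^ 3)) :=
  cubic_certificate_general n
end
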